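/- arXiv:1508.02793 — 2 statements merged into one kernel-verified Lean document; each statement's English description precedes it below -/
import Mathlib

section
/- The number of Motzkin paths of length 2n+1 with exactly n ascents equals the binomial coefficient C(n+2, 2). -/
/-!
An ascent contains an up step, so a path with `n` ascents has `#U ≥ n`; a Motzkin path has
`#U = #D`, and `#U + #D + #F = 2n + 1`. Hence `#U = #D = n`, there is exactly one flat step, and
every ascent is a single `U`. Reading such a path from the left, it must be `(UD)^a B_k (UD)^b`
with `a + k + b = n`, where the block around the flat step is `B_0 = F` or
`B_k = U F (UD)^(k-1) D`; conversely every such word qualifies. So these paths correspond to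
compositions of `n` into three parts, of which there are `C(n + 2, 2)`.
-/

inductive Step : Type
  | U | F | D
  deriving DecidableEq

instance : Fintype Step :=
  ⟨{Step.U, Step.F, Step.D}, fun x => by cases x <;> simp⟩

def stepVal : Step → ℤ
  | .U => 1
  | .F => 0
  | .D => -1

/-- Height of the path after the first `i` steps. -/
def ht (p : List Step) (i : ℕ) : ℤ := ((p.take i).map stepVal).sum

/-- A Motzkin path: starts and ends at height 0 and stays nonnegative. -/
def IsMotzkin (p : List Step) : Prop :=
  ht p p.length = 0 ∧ ∀ i ≤ p.length, 0 ≤ ht p i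

instance : DecidablePred IsMotzkin := fun p => by
  unfold IsMotzkin; infer_instance

/-- Number of ascents: maximal runs of up steps (counted at their last up step). -/
def asc (p : List Step) : ℕ :=
  ((List.range p.length).filter
    (fun i => p[i]? == some Step.U && p[i+1]? != some Step.U)).length

/-- Number of occurrences of `w` as a consecutive subword of `p`. -/
def countSubword (w p : List Step) : ℕ :=
  ((List.range p.length).filter (fun i => w.isPrefixOf (p.drop i))).length

/-- Number of plateaus: occurrences of a subword U F^k D for some k ≥ 0. -/
def plt (p : List Step) : ℕ :=
  ((List.range p.length).filter (fun i =>
    (List.range p.length).any (fun k =>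
      (Step.U :: (List.replicate k Step.F ++ [Step.D])).isPrefixOf (p.drop i)))).length

open Step

def IsMotzkinFrom : ℤ → List Step → Prop
  | h, [] => h = 0
  | h, s :: t => 0 ≤ h ∧ IsMotzkinFrom (h + stepVal s) t

theorem ht_zero (p : List Step) : ht p 0 = 0 := by simp [ht]

theorem ht_cons_succ (s : Step) (t : List Step) (i : ℕ) :
    ht (s :: t) (i + 1) = stepVal s + ht t i := by
  simp [ht]

theorem isMotzkinFrom_iff (h : ℤ) (p : List Step) :
    IsMotzkinFrom h p ↔ h + ht p p.length = 0 ∧ ∀ i ≤ p.length, 0 ≤ h + ht p i := by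
  induction p generalizing h with
  | nil => simpa [IsMotzkinFrom, ht] using fun h0 : h = 0 => h0.ge
  | cons s t ih =>
    simp only [IsMotzkinFrom, ih, List.length_cons, ← Nat.lt_succ_iff, Nat.forall_lt_succ_left,
      ht_zero, ht_cons_succ, add_zero, add_assoc]
    tauto

theorem isMotzkin_iff_isMotzkinFrom_zero (p : List Step) : IsMotzkin p ↔ IsMotzkinFrom 0 p := by
  simp [IsMotzkin, isMotzkinFrom_iff]

theorem ht_length (p : List Step) : ht p p.length = (p.count U : ℤ) - p.count D := by
  induction p with
  | nil => simp [ht]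
  | cons s t ih =>
    rw [List.length_cons, ht_cons_succ, ih]
    cases s <;> simp [stepVal] <;> ring

theorem IsMotzkin.count_U_eq_count_D {p : List Step} (hp : IsMotzkin p) :
    p.count U = p.count D := by
  have := hp.1
  rw [ht_length] at this
  omega

theorem asc_cons (s : Step) (t : List Step) :
    asc (s :: t) = asc t + if s = U ∧ t.head? ≠ some U then 1 else 0 := by
  unfold asc
  rw [List.length_cons, List.range_succ_eq_map, List.filter_cons, List.filter_map]
  simp only [Function.comp_def, List.getElem?_cons_succ, ← List.head?_eq_getElem?]
  by_cases hs : s = U <;> by_cases hU : t.head? = some U <;> simp [hs, hU]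

theorem asc_le_count_U (p : List Step) : asc p ≤ p.count U := by
  induction p with
  | nil => simp [asc]
  | cons s t ih =>
    rw [asc_cons, List.count_cons]
    split_ifs <;> grind

theorem asc_eq_count_U_of_cons {s : Step} {t : List Step}
    (h : asc (s :: t) = (s :: t).count U) : asc t = t.count U := by
  have := asc_le_count_U t
  rw [asc_cons, List.count_cons] at h
  split_ifs at h <;> grind

theorem asc_lt_count_U_cons_cons (t : List Step) : asc (U :: U :: t) < (U :: U :: t).count U := by
  have h := asc_le_count_U (U :: t)
  rw [asc_cons, if_neg (by simp)]
  simp only [List.count_cons_self] at h ⊢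
  omega

def upDowns : ℕ → List Step
  | 0 => []
  | a + 1 => U :: D :: upDowns a

def flatBlock : ℕ → List Step
  | 0 => [F]
  | k + 1 => U :: F :: (upDowns k ++ [D])

def maxAscentPath (a k b : ℕ) : List Step := upDowns a ++ flatBlock k ++ upDowns b

theorem length_upDowns (a : ℕ) : (upDowns a).length = 2 * a := by
  induction a with
  | zero => rfl
  | succ a ih => simp only [upDowns, List.length_cons, ih]; ring

theorem length_maxAscentPath (a k b : ℕ) :
    (maxAscentPath a k b).length = 2 * (a + k + b) + 1 := by
  cases k <;> simp [maxAscentPath, flatBlock, length_upDowns] <;> ring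

theorem asc_upDowns_append (a : ℕ) (X : List Step) : asc (upDowns a ++ X) = a + asc X := by
  induction a with
  | zero => simp [upDowns]
  | succ a ih => simp +arith [upDowns, asc_cons, ih]

theorem asc_maxAscentPath (a k b : ℕ) : asc (maxAscentPath a k b) = a + k + b := by
  have hb : asc (upDowns b) = b := by simpa [asc] using asc_upDowns_append b []
  cases k <;> simp +arith [maxAscentPath, flatBlock, asc_upDowns_append, asc_cons, hb]

theorem IsMotzkinFrom.nonneg {h : ℤ} {p : List Step} (hp : IsMotzkinFrom h p) : 0 ≤ h := by
  cases p with
  | nil => exact (show h = 0 from hp).ge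
  | cons s t => exact hp.1

theorem isMotzkinFrom_upDowns_append_iff (h : ℤ) (a : ℕ) (X : List Step) :
    IsMotzkinFrom h (upDowns a ++ X) ↔ IsMotzkinFrom h X := by
  induction a with
  | zero => simp [upDowns]
  | succ a ih =>
    simp only [upDowns, List.cons_append, IsMotzkinFrom, stepVal, add_neg_cancel_right, ih]
    exact ⟨fun hUD => hUD.2.2, fun hX => ⟨hX.nonneg, by linarith [hX.nonneg], hX⟩⟩

theorem isMotzkinFrom_maxAscentPath (a k b : ℕ) : IsMotzkinFrom 0 (maxAscentPath a k b) := by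
  have hb : IsMotzkinFrom 0 (upDowns b) := by
    simpa using (isMotzkinFrom_upDowns_append_iff 0 b []).2 rfl
  cases k <;>
    simp [maxAscentPath, flatBlock, isMotzkinFrom_upDowns_append_iff, IsMotzkinFrom, stepVal, hb]

theorem upDowns_injective : Function.Injective upDowns := fun a a' h => by
  simpa [length_upDowns] using congrArg List.length h

theorem upDowns_append_inj {a a' : ℕ} {X Y : List Step} (hX : ¬ [U, D] <+: X)
    (hY : ¬ [U, D] <+: Y) (h : upDowns a ++ X = upDowns a' ++ Y) : a = a' ∧ X = Y := by
  induction a generalizing a' with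
  | zero =>
    cases a' with
    | zero => exact ⟨rfl, h⟩
    | succ a' => simp only [upDowns, List.nil_append, List.cons_append] at h; simp [h] at hX
  | succ a ih =>
    cases a' with
    | zero => simp only [upDowns, List.nil_append, List.cons_append] at h; simp [← h] at hY
    | succ a' =>
      simp only [upDowns, List.cons_append, List.cons.injEq, true_and] at h
      simpa using ih h

theorem maxAscentPath_inj {a k b a' k' b' : ℕ} (h : maxAscentPath a k b = maxAscentPath a' k' b') :
    a = a' ∧ k = k' ∧ b = b' := by
  simp only [maxAscentPath, List.append_assoc] at h
  obtain ⟨rfl, h⟩ := upDowns_append_inj (by cases k <;> simp [flatBlock])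
    (by cases k' <;> simp [flatBlock]) h
  cases k <;> cases k' <;> simp only [flatBlock, List.cons_append, List.nil_append,
    List.append_assoc, List.append_cancel_left_eq, List.cons.injEq, reduceCtorEq, false_and,
    true_and] at h
  · exact ⟨rfl, rfl, upDowns_injective h⟩
  · obtain ⟨rfl, h⟩ := upDowns_append_inj (by simp) (by simp) h
    simpa using upDowns_injective (List.cons_injective (List.append_cancel_left h))

theorem eq_upDowns_of_isMotzkinFrom_zero : ∀ {p : List Step}, IsMotzkinFrom 0 p →
    p.count F = 0 → asc p = p.count U → ∃ b, p = upDowns b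
  | [], _, _, _ => ⟨0, rfl⟩
  | U :: D :: t, hp, hF, hU => by
    obtain ⟨b, rfl⟩ := eq_upDowns_of_isMotzkinFrom_zero (p := t)
      (by simpa [IsMotzkinFrom, stepVal] using hp) (by simpa using hF)
      (asc_eq_count_U_of_cons (asc_eq_count_U_of_cons hU))
    exact ⟨b + 1, rfl⟩
  | U :: U :: t, _, _, hU => absurd hU (asc_lt_count_U_cons_cons t).ne
  | [U], hp, _, _ => by simp [IsMotzkinFrom, stepVal] at hp
  | U :: F :: _, _, hF, _ => by simp at hF
  | F :: _, _, hF, _ => by simp at hF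
  | D :: _, hp, _, _ => absurd hp.2.nonneg (by simp [stepVal])

theorem eq_upDowns_append_D_of_isMotzkinFrom_one : ∀ {p : List Step}, IsMotzkinFrom 1 p →
    p.count F = 0 → asc p = p.count U → ∃ k b, p = upDowns k ++ D :: upDowns b
  | D :: t, hp, hF, hU => by
    obtain ⟨b, rfl⟩ := eq_upDowns_of_isMotzkinFrom_zero (p := t)
      (by simpa [IsMotzkinFrom, stepVal] using hp) (by simpa using hF) (asc_eq_count_U_of_cons hU)
    exact ⟨0, b, rfl⟩
  | U :: D :: t, hp, hF, hU => by
    obtain ⟨k, b, rfl⟩ := eq_upDowns_append_D_of_isMotzkinFrom_one (p := t)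
      (by simpa [IsMotzkinFrom, stepVal] using hp) (by simpa using hF)
      (asc_eq_count_U_of_cons (asc_eq_count_U_of_cons hU))
    exact ⟨k + 1, b, rfl⟩
  | U :: U :: t, _, _, hU => absurd hU (asc_lt_count_U_cons_cons t).ne
  | [], hp, _, _ => by simp [IsMotzkinFrom] at hp
  | [U], hp, _, _ => by simp [IsMotzkinFrom, stepVal] at hp
  | U :: F :: _, _, hF, _ => by simp at hF
  | F :: _, _, hF, _ => by simp at hF

theorem eq_maxAscentPath_of_isMotzkinFrom_zero : ∀ {p : List Step}, IsMotzkinFrom 0 p →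
    p.count F = 1 → asc p = p.count U → ∃ a k b, p = maxAscentPath a k b
  | F :: t, hp, hF, hU => by
    obtain ⟨b, rfl⟩ := eq_upDowns_of_isMotzkinFrom_zero (p := t)
      (by simpa [IsMotzkinFrom, stepVal] using hp) (by simpa using hF) (asc_eq_count_U_of_cons hU)
    exact ⟨0, 0, b, rfl⟩
  | U :: F :: t, hp, hF, hU => by
    obtain ⟨k, b, rfl⟩ := eq_upDowns_append_D_of_isMotzkinFrom_one (p := t)
      (by simpa [IsMotzkinFrom, stepVal] using hp) (by simpa using hF)
      (asc_eq_count_U_of_cons (asc_eq_count_U_of_cons hU))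
    exact ⟨0, k + 1, b, by simp [maxAscentPath, flatBlock, upDowns]⟩
  | U :: D :: t, hp, hF, hU => by
    obtain ⟨a, k, b, rfl⟩ := eq_maxAscentPath_of_isMotzkinFrom_zero (p := t)
      (by simpa [IsMotzkinFrom, stepVal] using hp) (by simpa using hF)
      (asc_eq_count_U_of_cons (asc_eq_count_U_of_cons hU))
    exact ⟨a + 1, k, b, rfl⟩
  | U :: U :: t, _, _, hU => absurd hU (asc_lt_count_U_cons_cons t).ne
  | [], _, hF, _ => by simp at hF
  | [U], hp, _, _ => by simp [IsMotzkinFrom, stepVal] at hp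
  | D :: _, hp, _, _ => absurd hp.2.nonneg (by simp [stepVal])

theorem count_U_add_count_D_add_count_F (p : List Step) :
    p.count U + p.count D + p.count F = p.length := by
  induction p with
  | nil => rfl
  | cons s t ih => cases s <;> simp <;> omega

theorem exists_maxAscentPath_eq {n : ℕ} {p : List Step} (hlen : p.length = 2 * n + 1)
    (hp : IsMotzkin p) (hasc : asc p = n) : ∃ a k b, a + k + b = n ∧ maxAscentPath a k b = p := by
  have hUD := hp.count_U_eq_count_D
  have hcount := count_U_add_count_D_add_count_F p
  have hle := asc_le_count_U p
  obtain ⟨a, k, b, rfl⟩ := eq_maxAscentPath_of_isMotzkinFrom_zero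
    ((isMotzkin_iff_isMotzkinFrom_zero p).1 hp) (by omega) (by omega)
  refine ⟨a, k, b, ?_, rfl⟩
  rw [length_maxAscentPath] at hlen
  omega

theorem card_sum_three_eq_choose (n : ℕ) :
    Nat.card {x : ℕ × ℕ × ℕ // x.1 + x.2.1 + x.2.2 = n} = (n + 2).choose 2 := by
  let e : {x : ℕ × ℕ × ℕ // x.1 + x.2.1 + x.2.2 = n} ≃ Σ j : Fin (n + 1), Fin (j + 1) :=
    { toFun := fun x => ⟨⟨x.1.1 + x.1.2.1, by have := x.2; omega⟩, ⟨x.1.1, by simp⟩⟩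
      invFun := fun y => ⟨(y.2, y.1 - y.2, n - y.1), by
        dsimp only; have := y.1.isLt; have := y.2.isLt; omega⟩
      left_inv := fun x => by ext <;> simp; omega
      right_inv := fun ⟨⟨j, hj⟩, ⟨a, ha⟩⟩ => by
        dsimp only at ha
        simp [Fin.heq_ext_iff (show a + (j - a) + 1 = j + 1 by omega)]
        omega }
  rw [Nat.card_congr e, Nat.card_eq_fintype_card, Fintype.card_sigma]
  simp only [Fintype.card_fin]
  have hshift := Finset.sum_range_succ' (fun i => i) (n + 1)
  rw [add_zero] at hshift
  rw [Fin.sum_univ_eq_sum_range (· + 1)]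
  rw [← hshift, Finset.sum_range_id, Nat.choose_two_right]

/-- The number of Motzkin paths of length 2n+1 with exactly n ascents is C(n+2,2). -/
theorem motzkin_max_ascents_odd (n : ℕ) :
    Nat.card {p : List Step // p.length = 2 * n + 1 ∧ IsMotzkin p ∧ asc p = n}
      = Nat.choose (n + 2) 2 := by
  rw [← card_sum_three_eq_choose n]
  let toPath (x : {x : ℕ × ℕ × ℕ // x.1 + x.2.1 + x.2.2 = n}) :
      {p : List Step // p.length = 2 * n + 1 ∧ IsMotzkin p ∧ asc p = n} :=
    ⟨maxAscentPath x.1.1 x.1.2.1 x.1.2.2,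
      by rw [length_maxAscentPath, x.2],
      (isMotzkin_iff_isMotzkinFrom_zero _).2 (isMotzkinFrom_maxAscentPath _ _ _),
      by rw [asc_maxAscentPath, x.2]⟩
  have injective : Function.Injective toPath := fun x y hxy => by
    obtain ⟨ha, hk, hb⟩ := maxAscentPath_inj (congrArg Subtype.val hxy)
    ext <;> assumption
  have surjective : Function.Surjective toPath := fun ⟨p, hlen, hp, hasc⟩ => by
    obtain ⟨a, k, b, hsum, rfl⟩ := exists_maxAscentPath_eq hlen hp hasc
    exact ⟨⟨(a, k, b), hsum⟩, rfl⟩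
  exact (Nat.card_congr (Equiv.ofBijective toPath ⟨injective, surjective⟩)).symm
end

section
/- Let F(x,t) = Σ_{n≥0} Σ_{μ ∈ M_n} t^{plt(μ)} x^n be the generating function for Motzkin paths by length and total number of plateaus. Then (x² − x³)·F(x,t)² − (1 − 2x − x²(t−2))·F(x,t) + (1 − x) = 0 as formal power series. -/
open PowerSeries Polynomial

/-- The generating function for Motzkin paths by length and total number of plateaus. -/
noncomputable def Fplt : PowerSeries (Polynomial ℚ) :=
  PowerSeries.mk fun n =>
    ∑ f : Fin n → Step,
      if IsMotzkin (List.ofFn f) then (Polynomial.X : Polynomial ℚ) ^ plt (List.ofFn f) else 0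


/-!
A nonempty Motzkin path is either `F μ` or, cutting at its first return to the axis, `U ν D μ`
with `ν`, `μ` Motzkin. The plateaus of `U ν D μ` are those of `ν` and of `μ`, plus one more
exactly when `ν = F^k`; since the flat paths have generating function `1/(1 - x)`, this gives
`F = 1 + x F + x² (F + (t - 1)/(1 - x)) F`, and clearing the denominator gives the equation.
-/

open Step

def startsFlatDown : List Step → Bool
  | [] => false
  | F :: q => startsFlatDown q
  | D :: _ => true
  | U :: _ => false

def startsPlateau : List Step → Bool
  | U :: q => startsFlatDown q
  | _ => false

theorem replicate_F_append_D_prefix_cons_iff {k : ℕ} {x : Step} {q : List Step} :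
    List.replicate k F ++ [D] <+: x :: q ↔
      k = 0 ∧ x = D ∨ ∃ j, k = j + 1 ∧ x = F ∧ List.replicate j F ++ [D] <+: q := by
  rcases k with _ | j <;> simp [List.replicate_succ, List.cons_prefix_cons, eq_comm]

theorem startsFlatDown_iff {q : List Step} :
    startsFlatDown q ↔ ∃ k, List.replicate k F ++ [D] <+: q := by
  induction q with
  | nil => simp [startsFlatDown]
  | cons x q ih =>
    simp only [replicate_F_append_D_prefix_cons_iff]
    cases x <;> simp [startsFlatDown, ih]

theorem startsPlateau_iff {q : List Step} :
    startsPlateau q ↔ ∃ k, U :: (List.replicate k F ++ [D]) <+: q := by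
  rcases q with _ | ⟨_ | _ | _, q⟩ <;> simp [startsPlateau, startsFlatDown_iff]

theorem plt_eq_length_filter (p : List Step) :
    plt p = ((List.range p.length).filter fun i => startsPlateau (p.drop i)).length := by
  unfold plt
  congr 1
  refine List.filter_congr fun i _ => Bool.eq_iff_iff.mpr ?_
  -- the bound `k < p.length` in `plt` is automatic, as `U F^k D` has length `k + 2`
  simp only [List.any_eq_true, List.mem_range, ← List.isPrefixOf_iff_prefix, startsPlateau_iff]
  refine ⟨fun ⟨k, _, hk⟩ => ⟨k, hk⟩, fun ⟨k, hk⟩ => ⟨k, ?_, hk⟩⟩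
  have := (List.isPrefixOf_iff_prefix.mp hk).length_le
  simp at this
  omega

@[simp] theorem plt_nil : plt [] = 0 := rfl

theorem plt_cons (x : Step) (p : List Step) :
    plt (x :: p) = (if startsPlateau (x :: p) then 1 else 0) + plt p := by
  rw [plt_eq_length_filter, plt_eq_length_filter, List.length_cons, List.range_succ_eq_map,
    List.filter_cons, List.filter_map, List.drop_zero]
  split <;> simp_all [Function.comp_def, add_comm]

def height (p : List Step) : ℤ := (p.map stepVal).sum

@[simp] theorem height_nil : height [] = 0 := rfl

@[simp] theorem height_cons (x : Step) (p : List Step) :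
    height (x :: p) = stepVal x + height p := by
  simp [height]

@[simp] theorem height_append (l q : List Step) : height (l ++ q) = height l + height q := by
  simp [height]

def StaysAbove (c : ℤ) (p : List Step) : Prop := ∀ i, c ≤ height (p.take i)

theorem StaysAbove.nonpos {c : ℤ} {p : List Step} (h : StaysAbove c p) : c ≤ 0 := by
  simpa using h 0

theorem StaysAbove.mono {c c' : ℤ} {p : List Step} (h : StaysAbove c p) (hc : c' ≤ c) :
    StaysAbove c' p :=
  fun i => hc.trans (h i)

@[simp] theorem staysAbove_nil {c : ℤ} : StaysAbove c [] ↔ c ≤ 0 := by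
  simp [StaysAbove]

@[simp] theorem staysAbove_cons {c : ℤ} {x : Step} {p : List Step} :
    StaysAbove c (x :: p) ↔ c ≤ 0 ∧ StaysAbove (c - stepVal x) p := by
  refine ⟨fun h => ⟨h.nonpos, fun i => ?_⟩, fun ⟨hc, h⟩ i => ?_⟩
  · have := h (i + 1)
    simp only [List.take_succ_cons, height_cons] at this
    linarith
  · rcases i with _ | i
    · simpa using hc
    · have := h i
      simp only [List.take_succ_cons, height_cons]
      linarith

@[simp] theorem staysAbove_append {c : ℤ} {l q : List Step} :
    StaysAbove c (l ++ q) ↔ StaysAbove c l ∧ StaysAbove (c - height l) q := by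
  induction l generalizing c with
  | nil =>
    exact ⟨fun h => ⟨staysAbove_nil.mpr h.nonpos, by simpa using h⟩, fun h => by simpa using h.2⟩
  | cons x l ih => simp [ih, sub_sub, and_assoc]

theorem isMotzkin_iff {p : List Step} : IsMotzkin p ↔ height p = 0 ∧ StaysAbove 0 p := by
  refine and_congr (by simp [ht, height]) ⟨fun h i => ?_, fun h i _ => h i⟩
  rcases le_total i p.length with hi | hi
  · exact h i hi
  · simpa [ht, height, List.take_of_length_le hi] using h p.length le_rfl

inductive MotzkinWord : List Step → Prop
  | nil : MotzkinWord []
  | flat {p : List Step} : MotzkinWord p → MotzkinWord (F :: p)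
  | upDown {ν μ : List Step} : MotzkinWord ν → MotzkinWord μ → MotzkinWord (U :: (ν ++ D :: μ))

theorem MotzkinWord.isMotzkin {p : List Step} (h : MotzkinWord p) : IsMotzkin p := by
  induction h with
  | nil => simp [isMotzkin_iff]
  | flat _ ih => simpa [isMotzkin_iff, stepVal] using ih
  | upDown _ _ ihν ihμ =>
    simp only [isMotzkin_iff] at *
    exact ⟨by simp [stepVal, ihν.1, ihμ.1],
      by simp [stepVal, ihν.1, ihμ.2, ihν.2.mono (by norm_num : (-1 : ℤ) ≤ 0)]⟩

/-- First passage to level `c - 1`; the level is arbitrary so that the induction goes through. -/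
theorem exists_eq_append_D_cons (r : List Step) {c : ℤ} (hc : c ≤ 0)
    (hr : StaysAbove (c - 1) r) (hend : height r < c) :
    ∃ ν μ, r = ν ++ D :: μ ∧ height ν = c ∧ StaysAbove c ν := by
  induction r generalizing c with
  | nil => simp at hend; omega
  | cons x r ih =>
    rw [staysAbove_cons] at hr
    rw [height_cons] at hend
    cases x with
    | U =>
      obtain ⟨ν, μ, rfl, hν, hνc⟩ := ih (c := c - 1) (by omega) (by simpa [stepVal] using hr.2)
        (by simp [stepVal] at hend; omega)
      exact ⟨U :: ν, μ, rfl, by simp [stepVal, hν], by simpa [stepVal, hc] using hνc⟩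
    | F =>
      obtain ⟨ν, μ, rfl, hν, hνc⟩ := ih hc (by simpa [stepVal] using hr.2)
        (by simpa [stepVal] using hend)
      exact ⟨F :: ν, μ, rfl, by simp [stepVal, hν], by simpa [stepVal, hc] using hνc⟩
    | D =>
      rcases hc.lt_or_eq with hc | rfl
      · obtain ⟨ν, μ, rfl, hν, hνc⟩ := ih (c := c + 1) (by omega) (by simpa [stepVal] using hr.2)
          (by simp [stepVal] at hend; omega)
        exact ⟨D :: ν, μ, rfl, by simp [stepVal, hν], by simpa [stepVal, hc.le] using hνc⟩
      · exact ⟨[], r, rfl, rfl, by simp⟩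

theorem IsMotzkin.of_F_cons {p : List Step} (h : IsMotzkin (F :: p)) : IsMotzkin p := by
  simpa [isMotzkin_iff, stepVal] using h

theorem not_isMotzkin_D_cons {p : List Step} : ¬IsMotzkin (D :: p) := fun h => by
  simpa [stepVal] using (staysAbove_cons.mp (isMotzkin_iff.mp h).2).2.nonpos

theorem IsMotzkin.exists_of_U_cons {r : List Step} (h : IsMotzkin (U :: r)) :
    ∃ ν μ, r = ν ++ D :: μ ∧ IsMotzkin ν ∧ IsMotzkin μ := by
  simp only [isMotzkin_iff, height_cons, staysAbove_cons, stepVal] at h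
  obtain ⟨hr, -, habove⟩ := h
  obtain ⟨ν, μ, rfl, hν, hνc⟩ := exists_eq_append_D_cons r le_rfl habove (by omega)
  simp only [staysAbove_append, staysAbove_cons, height_append, height_cons, hν, stepVal]
    at hr habove
  exact ⟨ν, μ, rfl, isMotzkin_iff.mpr ⟨hν, hνc⟩,
    isMotzkin_iff.mpr ⟨by omega, by simpa using habove.2.2⟩⟩

theorem IsMotzkin.motzkinWord {p : List Step} (h : IsMotzkin p) : MotzkinWord p := by
  induction hlen : p.length using Nat.strong_induction_on generalizing p with
  | _ n ih =>
  rcases p with _ | ⟨_ | _ | _, r⟩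
  · exact .nil
  · obtain ⟨ν, μ, rfl, hν, hμ⟩ := h.exists_of_U_cons
    exact .upDown (ih _ (by simp [← hlen]) hν rfl) (ih _ (by simp [← hlen]; omega) hμ rfl)
  · exact .flat (ih _ (by simp [← hlen]) h.of_F_cons rfl)
  · exact absurd h not_isMotzkin_D_cons

theorem isMotzkin_iff_motzkinWord {p : List Step} : IsMotzkin p ↔ MotzkinWord p :=
  ⟨IsMotzkin.motzkinWord, MotzkinWord.isMotzkin⟩

namespace MotzkinWord

variable {ν ν' μ μ' : List Step}

theorem append_D_cons_inj (hν : MotzkinWord ν) (hν' : MotzkinWord ν')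
    (h : ν ++ D :: μ = ν' ++ D :: μ') : ν = ν' ∧ μ = μ' := by
  induction hν generalizing ν' μ μ' with
  | nil => cases hν' <;> simp_all
  | flat _ ih =>
    cases hν' with
    | flat hν' => simpa using ih hν' (List.cons.inj h).2
    | _ => simp_all
  | upDown _ _ ih₁ ih₂ =>
    cases hν' with
    | upDown hν₁' hν₂' =>
      simp only [List.cons_append, List.append_assoc, List.cons.injEq, true_and] at h
      obtain ⟨rfl, hrest⟩ := ih₁ hν₁' h
      obtain ⟨rfl, rfl⟩ := ih₂ hν₂' hrest
      exact ⟨rfl, rfl⟩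
    | _ => simp_all

theorem startsFlatDown_append_D_cons (h : MotzkinWord ν) :
    startsFlatDown (ν ++ D :: μ) ↔ ∀ s ∈ ν, s = F := by
  induction h with
  | nil => simp [startsFlatDown]
  | flat _ ih => simpa [startsFlatDown] using ih
  | upDown => simp [startsFlatDown]

theorem plt_append_D_cons (h : MotzkinWord ν) : plt (ν ++ D :: μ) = plt ν + plt μ := by
  induction h generalizing μ with
  | nil => simp [plt_cons, startsPlateau]
  | flat _ ih => simp [plt_cons, startsPlateau, ih]
  | upDown hν₁ _ ih₁ ih₂ =>
    simp only [List.cons_append, List.append_assoc, plt_cons, startsPlateau,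
      hν₁.startsFlatDown_append_D_cons, ih₁, ih₂]
    omega

theorem plt_U_cons_append_D_cons (h : MotzkinWord ν) :
    plt (U :: (ν ++ D :: μ)) = (if ∀ s ∈ ν, s = F then 1 else 0) + plt ν + plt μ := by
  simp only [plt_cons, startsPlateau, h.startsFlatDown_append_D_cons, h.plt_append_D_cons]
  omega

end MotzkinWord

open Finset

def motzkinPaths (n : ℕ) : Finset (List Step) :=
  ((Finset.univ : Finset (Fin n → Step)).image List.ofFn).filter IsMotzkin

theorem mem_motzkinPaths {n : ℕ} {p : List Step} :
    p ∈ motzkinPaths n ↔ p.length = n ∧ MotzkinWord p := by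
  simp only [motzkinPaths, Finset.mem_filter, Finset.mem_image, Finset.mem_univ, true_and,
    isMotzkin_iff_motzkinWord]
  refine and_congr_left fun _ => ⟨?_, ?_⟩
  · rintro ⟨f, rfl⟩
    simp
  · rintro rfl
    exact ⟨p.get, List.ofFn_get p⟩

theorem motzkinPaths_zero : motzkinPaths 0 = {[]} := by
  ext p
  simp only [mem_motzkinPaths, List.length_eq_zero_iff, Finset.mem_singleton]
  exact ⟨And.left, fun h => ⟨h, h ▸ .nil⟩⟩

theorem motzkinPaths_one : motzkinPaths 1 = {[F]} := by
  ext p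
  simp only [mem_motzkinPaths, Finset.mem_singleton]
  refine ⟨fun ⟨hlen, hp⟩ => ?_, fun h => h ▸ ⟨rfl, .flat .nil⟩⟩
  cases hp with
  | nil => simp at hlen
  | flat hp => cases hp <;> simp_all
  | upDown => simp at hlen

def firstReturnParts (n : ℕ) : Finset ((_ : ℕ × ℕ) × List Step × List Step) :=
  (antidiagonal n).sigma fun ij => motzkinPaths ij.1 ×ˢ motzkinPaths ij.2

theorem motzkinPaths_add_two (n : ℕ) :
    motzkinPaths (n + 2) = (motzkinPaths (n + 1)).map ⟨(F :: ·), List.cons_injective⟩ ∪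
      (firstReturnParts n).image fun x => U :: (x.2.1 ++ D :: x.2.2) := by
  ext p
  simp only [firstReturnParts, Finset.mem_union, Finset.mem_map, Finset.mem_image,
    Finset.mem_sigma, Finset.mem_product, Finset.HasAntidiagonal.mem_antidiagonal,
    mem_motzkinPaths, Function.Embedding.coeFn_mk, Sigma.exists, Prod.exists]
  constructor
  · rintro ⟨hlen, hp⟩
    cases hp with
    | nil => simp at hlen
    | flat hq => exact .inl ⟨_, ⟨by simpa using hlen, hq⟩, rfl⟩
    | @upDown ν μ hν hμ =>
      simp only [List.length_cons, List.length_append] at hlen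
      exact .inr ⟨ν.length, μ.length, ν, μ, ⟨by omega, ⟨rfl, hν⟩, rfl, hμ⟩, rfl⟩
  · rintro (⟨q, ⟨hlen, hq⟩, rfl⟩ | ⟨i, j, ν, μ, ⟨hij, ⟨rfl, hν⟩, rfl, hμ⟩, rfl⟩)
    · exact ⟨by simp [hlen], .flat hq⟩
    · exact ⟨by simp [← hij]; omega, .upDown hν hμ⟩

noncomputable def plateauPoly (n : ℕ) : ℚ[X] := ∑ p ∈ motzkinPaths n, Polynomial.X ^ plt p

theorem coeff_Fplt (n : ℕ) : coeff n Fplt = plateauPoly n := by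
  rw [Fplt, coeff_mk, plateauPoly, motzkinPaths, Finset.filter_image,
    Finset.sum_image fun _ _ _ _ h => List.ofFn_injective h, Finset.sum_filter]

theorem plateauPoly_zero : plateauPoly 0 = 1 := by
  simp [plateauPoly, motzkinPaths_zero]

theorem plateauPoly_one : plateauPoly 1 = 1 := by
  simp [plateauPoly, motzkinPaths_one, plt_cons, startsPlateau]

theorem plt_eq_zero_of_forall_eq_F {p : List Step} (h : ∀ s ∈ p, s = F) : plt p = 0 := by
  induction p with
  | nil => rfl
  | cons x p ih =>
    obtain rfl : x = F := h x (by simp)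
    simpa [plt_cons, startsPlateau] using ih fun s hs => h s (by simp [hs])

/-- The flat path `F^n` is the only path of length `n` carrying the extra plateau. -/
theorem sum_pow_ite_add_plt (n : ℕ) :
    ∑ ν ∈ motzkinPaths n, (Polynomial.X : ℚ[X]) ^ ((if ∀ s ∈ ν, s = F then 1 else 0) + plt ν) =
      plateauPoly n + (Polynomial.X - 1) := by
  have hflat : List.replicate n F ∈ motzkinPaths n := by
    refine mem_motzkinPaths.mpr ⟨List.length_replicate, ?_⟩
    induction n with
    | zero => exact .nil
    | succ n ih => exact .flat ih
  have hterm : ∀ ν : List Step,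
      (Polynomial.X : ℚ[X]) ^ ((if ∀ s ∈ ν, s = F then 1 else 0) + plt ν) =
        Polynomial.X ^ plt ν + if ∀ s ∈ ν, s = F then Polynomial.X - 1 else 0 := by
    intro ν
    split_ifs with h
    · simp [plt_eq_zero_of_forall_eq_F h]
    · simp
  rw [Finset.sum_congr rfl fun ν _ => hterm ν, Finset.sum_add_distrib]
  congr 1
  rw [Finset.sum_eq_single_of_mem _ hflat, if_pos (by simp [List.mem_replicate])]
  intro ν hν hne
  rw [if_neg fun h => hne (List.eq_replicate_iff.mpr ⟨(mem_motzkinPaths.mp hν).1, h⟩)]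

theorem plateauPoly_add_two (n : ℕ) :
    plateauPoly (n + 2) = plateauPoly (n + 1) +
      ∑ ij ∈ antidiagonal n, (plateauPoly ij.1 + (Polynomial.X - 1)) * plateauPoly ij.2 := by
  have hdisj : Disjoint ((motzkinPaths (n + 1)).map ⟨(F :: ·), List.cons_injective⟩)
      ((firstReturnParts n).image fun x => U :: (x.2.1 ++ D :: x.2.2)) := by
    simp [Finset.disjoint_left]
  have hinj : Set.InjOn (fun x : (_ : ℕ × ℕ) × List Step × List Step => U :: (x.2.1 ++ D :: x.2.2))
      (firstReturnParts n) := by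
    rintro ⟨ij, ν, μ⟩ hx ⟨ij', ν', μ'⟩ hx' h
    simp only [firstReturnParts, Finset.coe_sigma, Set.mem_sigma_iff, Finset.mem_coe,
      Finset.mem_product, mem_motzkinPaths] at hx hx'
    obtain ⟨rfl, rfl⟩ := hx.2.1.2.append_D_cons_inj hx'.2.1.2 (List.cons.inj h).2
    obtain ⟨i, j⟩ := ij
    obtain ⟨i', j'⟩ := ij'
    obtain ⟨-, ⟨rfl, -⟩, rfl, -⟩ := hx
    obtain ⟨-, ⟨rfl, -⟩, rfl, -⟩ := hx'
    rfl
  rw [plateauPoly, motzkinPaths_add_two, Finset.sum_union hdisj, Finset.sum_map,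
    Finset.sum_image hinj, firstReturnParts, Finset.sum_sigma]
  refine congrArg₂ (· + ·) (by simp [plateauPoly, plt_cons, startsPlateau]) ?_
  refine Finset.sum_congr rfl fun ij _ => ?_
  rw [← sum_pow_ite_add_plt, plateauPoly, Finset.sum_mul_sum, Finset.sum_product]
  refine Finset.sum_congr rfl fun ν hν => Finset.sum_congr rfl fun μ _ => ?_
  rw [(mem_motzkinPaths.mp hν).2.plt_U_cons_append_D_cons, pow_add]

theorem Fplt_eq :
    Fplt = 1 + PowerSeries.X * Fplt + PowerSeries.X ^ 2 *
      ((Fplt + (PowerSeries.C (R := ℚ[X]) Polynomial.X - 1) * PowerSeries.mk 1) * Fplt) := by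
  refine PowerSeries.ext fun n => ?_
  rcases n with _ | _ | n
  · simp [coeff_Fplt, plateauPoly_zero]
  · simp [coeff_Fplt, plateauPoly_zero, plateauPoly_one, PowerSeries.coeff_one,
      PowerSeries.coeff_X_pow_mul']
  · rw [coeff_Fplt, plateauPoly_add_two, map_add, map_add, coeff_succ_X_mul, coeff_Fplt,
      PowerSeries.coeff_X_pow_mul', if_pos (by omega), show n + 1 + 1 - 2 = n by omega,
      PowerSeries.coeff_mul]
    simp [coeff_Fplt, add_mul, sub_mul, Finset.sum_add_distrib, PowerSeries.coeff_one,
      PowerSeries.coeff_C_mul]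

/-- F(x,t) satisfies (x² − x³)F² − (1 − 2x − x²(t−2))F + (1 − x) = 0. -/
theorem plateau_functional_equation :
    (PowerSeries.X ^ 2 - PowerSeries.X ^ 3) * Fplt ^ 2
      - (1 - 2 * PowerSeries.X - PowerSeries.X ^ 2
          * (PowerSeries.C (R := Polynomial ℚ) Polynomial.X - 2)) * Fplt
      + (1 - PowerSeries.X) = 0 := by
  linear_combination (PowerSeries.X - 1) * Fplt_eq
    - PowerSeries.X ^ 2 * (PowerSeries.C (R := ℚ[X]) Polynomial.X - 1) * Fplt *
      PowerSeries.mk_one_mul_one_sub_eq_one ℚ[X]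
end
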